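/- arXiv:2110.01492 — 6 statements merged into one kernel-verified Lean document; each statement's English description precedes it below -/
import Mathlib

section
/- For every integer k ≥ 0 there exists a constant C_k > 0 such that for all ω ∈ (0, 1/8] and all x ∈ ℝ, the k-th derivative of φ_ω satisfies |φ_ω^{(k)}(x)| ≤ C_k ω^{(1+k)/2} e^{−√ω |x|}. -/
open Real

/-!
Rescaling gives `φ_ω(x) = √ω · Φ_a(√ω x)` with `Φ_a(y) = 2 / √(1 + a cosh 2y)` and `a = a_ω`,
so `φ_ω^{(k)}(x) = ω^{(k+1)/2} Φ_a^{(k)}(√ω x)` and it suffices to bound `Φ_a^{(k)}` by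
`C e^{-|y|}` uniformly for `a ≥ 1/2` (which holds for `ω ≤ 1/8`). The pair `Φ = Φ_a`,
`R = Φ'/Φ` solves `Φ' = R Φ`, `R' = -2 + Φ²/2 + 2R²`, a system in which `a` no longer
appears, and `|Φ| ≤ 4 e^{-|y|}`, `|R| ≤ 1`. Differentiating the system `k` times and applying
Leibniz' rule bounds all derivatives inductively, with constants depending only on `k`.
-/

/-- The solitary-wave profile of the cubic–quintic NLS. -/
noncomputable def phi (ω x : ℝ) : ℝ :=
  Real.sqrt (4 * ω / (1 + Real.sqrt (1 - 16 * ω / 3) * Real.cosh (2 * Real.sqrt ω * x)))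

lemma abs_iteratedDeriv_mul_le {f g : ℝ → ℝ} {n : ℕ} {x A B : ℝ}
    (hf : ContDiffAt ℝ n f x) (hg : ContDiffAt ℝ n g x)
    (hA : ∀ i ≤ n, |iteratedDeriv i f x| ≤ A) (hB : ∀ i ≤ n, |iteratedDeriv i g x| ≤ B) :
    |iteratedDeriv n (fun y => f y * g y) x| ≤ 2 ^ n * A * B := by
  have hA₀ : 0 ≤ A := (abs_nonneg _).trans (hA 0 n.zero_le)
  have hterm : ∀ i ∈ Finset.range (n + 1),
      |(n.choose i : ℝ) * iteratedDeriv i f x * iteratedDeriv (n - i) g x| ≤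
        n.choose i * (A * B) := by
    intro i hi
    have hi : i ≤ n := Nat.lt_succ_iff.mp (Finset.mem_range.mp hi)
    rw [abs_mul, abs_mul, Nat.abs_cast, mul_assoc]
    gcongr
    exacts [hA i hi, hB (n - i) (n.sub_le i)]
  calc |iteratedDeriv n (fun y => f y * g y) x|
      ≤ ∑ i ∈ Finset.range (n + 1), (n.choose i : ℝ) * (A * B) := by
        rw [iteratedDeriv_fun_mul hf hg]
        exact (Finset.abs_sum_le_sum_abs _ _).trans (Finset.sum_le_sum hterm)
    _ = 2 ^ n * A * B := by
        rw [← Finset.sum_mul, ← Nat.cast_sum, Nat.sum_range_choose, mul_assoc]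
        push_cast; ring

lemma abs_iteratedDeriv_const_add_le (c : ℝ) (g : ℝ → ℝ) (n : ℕ) (x : ℝ) :
    |iteratedDeriv n (fun y => c + g y) x| ≤ |c| + |iteratedDeriv n g x| := by
  rcases n.eq_zero_or_pos with rfl | hn
  · simpa using abs_add_le c (g x)
  · rw [iteratedDeriv_const_add hn]
    exact le_add_of_nonneg_left (abs_nonneg c)

/-- The recursion is Leibniz' rule applied to `f' = r f`, `r' = α + β f² + γ r²`. -/
noncomputable def riccatiBound (α β γ B : ℝ) : ℕ → ℝ
  | 0 => B
  | k + 1 => riccatiBound α β γ B k + |α| + (1 + |β| + |γ|) * 2 ^ k * riccatiBound α β γ B k ^ 2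

section Riccati

variable {α β γ B : ℝ}

lemma riccatiBound_monotone : Monotone (riccatiBound α β γ B) :=
  monotone_nat_of_le_succ fun k => by
    rw [riccatiBound]
    have : 0 ≤ (1 + |β| + |γ|) * 2 ^ k * riccatiBound α β γ B k ^ 2 := by positivity
    linarith [abs_nonneg α]

variable {f r w : ℝ → ℝ} (hf : ContDiff ℝ (⊤ : ℕ∞) f) (hr : ContDiff ℝ (⊤ : ℕ∞) r)
  (hf' : deriv f = fun y => r y * f y) (hr' : deriv r = fun y => α + β * f y ^ 2 + γ * r y ^ 2)
  (hw : ∀ y, w y ∈ Set.Icc 0 1) (hfB : ∀ y, |f y| ≤ B * w y) (hrB : ∀ y, |r y| ≤ B)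
include hf hr hf' hr' hw hfB hrB

theorem abs_iteratedDeriv_le_riccatiBound (k : ℕ) (y : ℝ) :
    |iteratedDeriv k f y| ≤ riccatiBound α β γ B k * w y ∧
      |iteratedDeriv k r y| ≤ riccatiBound α β γ B k := by
  induction k using Nat.strong_induction_on with
  | _ k ih =>
  rcases k with _ | k
  · simpa [riccatiBound] using ⟨hfB y, hrB y⟩
  set C := riccatiBound α β γ B k
  obtain ⟨hw₀, hw₁⟩ := hw y
  have hC : 0 ≤ C := ((abs_nonneg _).trans (hrB y)).trans (riccatiBound_monotone k.zero_le)
  have hCf : ∀ i ≤ k, |iteratedDeriv i f y| ≤ C * w y := fun i hi =>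
    (ih i (by omega)).1.trans (mul_le_mul_of_nonneg_right (riccatiBound_monotone hi) hw₀)
  have hCf' : ∀ i ≤ k, |iteratedDeriv i f y| ≤ C := fun i hi =>
    (hCf i hi).trans (mul_le_of_le_one_right hC hw₁)
  have hCr : ∀ i ≤ k, |iteratedDeriv i r y| ≤ C := fun i hi =>
    (ih i (by omega)).2.trans (riccatiBound_monotone hi)
  have hf_k := contDiff_infty.mp hf k |>.contDiffAt (x := y)
  have hr_k := contDiff_infty.mp hr k |>.contDiffAt (x := y)
  have hstep : riccatiBound α β γ B (k + 1) = C + |α| + (1 + |β| + |γ|) * 2 ^ k * C ^ 2 := rfl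
  have hterm : 0 ≤ 2 ^ k * C ^ 2 := by positivity
  have hsq : 2 ^ k * C ^ 2 ≤ riccatiBound α β γ B (k + 1) := by
    rw [hstep]
    nlinarith [abs_nonneg α, abs_nonneg β, abs_nonneg γ]
  constructor
  · calc |iteratedDeriv (k + 1) f y| = |iteratedDeriv k (fun y => r y * f y) y| := by
          rw [iteratedDeriv_succ', hf']
      _ ≤ 2 ^ k * C * (C * w y) := abs_iteratedDeriv_mul_le hr_k hf_k hCr hCf
      _ ≤ riccatiBound α β γ B (k + 1) * w y := by
          rw [show 2 ^ k * C * (C * w y) = 2 ^ k * C ^ 2 * w y by ring]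
          exact mul_le_mul_of_nonneg_right hsq hw₀
  · have hr'' : deriv r = fun y => α + (β * (f y * f y) + γ * (r y * r y)) := by
      rw [hr']; ext; ring
    have hff := abs_iteratedDeriv_mul_le hf_k hf_k hCf' hCf'
    have hrr := abs_iteratedDeriv_mul_le hr_k hr_k hCr hCr
    calc |iteratedDeriv (k + 1) r y|
        ≤ |α| + |β * iteratedDeriv k (fun y => f y * f y) y +
            γ * iteratedDeriv k (fun y => r y * r y) y| := by
          rw [iteratedDeriv_succ', hr'']
          refine (abs_iteratedDeriv_const_add_le _ _ _ _).trans_eq ?_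
          rw [iteratedDeriv_fun_add (contDiffAt_const.mul (hf_k.mul hf_k))
            (contDiffAt_const.mul (hr_k.mul hr_k)),
            iteratedDeriv_const_mul_field, iteratedDeriv_const_mul_field]
      _ ≤ |α| + (|β| * (2 ^ k * C * C) + |γ| * (2 ^ k * C * C)) := by
          gcongr
          refine (abs_add_le _ _).trans ?_
          rw [abs_mul, abs_mul]
          gcongr
      _ ≤ riccatiBound α β γ B (k + 1) := by
          rw [hstep]
          nlinarith [abs_nonneg α, abs_nonneg β, abs_nonneg γ]

end Riccati

noncomputable def profileDenom (a y : ℝ) : ℝ := 1 + a * cosh (2 * y)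

/-- `phi ω x = √ω * profile a (√ω * x)` with `a = √(1 - 16ω/3)`. -/
noncomputable def profile (a y : ℝ) : ℝ := 2 / √(profileDenom a y)

noncomputable def profileLogDeriv (a y : ℝ) : ℝ := -(a * sinh (2 * y)) / profileDenom a y

section Profile

variable {a : ℝ}

lemma one_le_profileDenom (ha : 0 ≤ a) (y : ℝ) : 1 ≤ profileDenom a y :=
  le_add_of_nonneg_right (mul_nonneg ha (zero_le_one.trans (one_le_cosh _)))

lemma profileDenom_pos (ha : 0 ≤ a) (y : ℝ) : 0 < profileDenom a y :=
  zero_lt_one.trans_le (one_le_profileDenom ha y)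

lemma hasDerivAt_two_mul (y : ℝ) : HasDerivAt (fun y : ℝ => 2 * y) 2 y := by
  simpa using (hasDerivAt_id y).const_mul 2

lemma hasDerivAt_profileDenom (y : ℝ) :
    HasDerivAt (profileDenom a) (2 * a * sinh (2 * y)) y :=
  (((hasDerivAt_two_mul y).cosh.const_mul a).const_add 1).congr_deriv (by ring)

lemma contDiff_profileDenom : ContDiff ℝ (⊤ : ℕ∞) (profileDenom a) := by
  unfold profileDenom; fun_prop

lemma contDiff_profile (ha : 0 ≤ a) : ContDiff ℝ (⊤ : ℕ∞) (profile a) :=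
  contDiff_const.div (contDiff_profileDenom.sqrt fun y => (profileDenom_pos ha y).ne')
    fun y => (sqrt_pos.mpr (profileDenom_pos ha y)).ne'

lemma contDiff_profileLogDeriv (ha : 0 ≤ a) : ContDiff ℝ (⊤ : ℕ∞) (profileLogDeriv a) := by
  unfold profileLogDeriv
  exact ContDiff.div (by fun_prop) contDiff_profileDenom fun y => (profileDenom_pos ha y).ne'

lemma profile_sq (ha : 0 ≤ a) (y : ℝ) : profile a y ^ 2 = 4 / profileDenom a y := by
  rw [profile, div_pow, sq_sqrt (profileDenom_pos ha y).le]; norm_num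

lemma hasDerivAt_profile (ha : 0 ≤ a) (y : ℝ) :
    HasDerivAt (profile a) (profileLogDeriv a y * profile a y) y := by
  have hD := profileDenom_pos ha y
  refine ((hasDerivAt_const y (2 : ℝ)).div ((hasDerivAt_profileDenom y).sqrt hD.ne')
    (sqrt_pos.mpr hD).ne').congr_deriv ?_
  rw [profileLogDeriv, profile]
  field_simp
  rw [sq_sqrt hD.le]
  ring

lemma hasDerivAt_profileLogDeriv (ha : 0 ≤ a) (y : ℝ) :
    HasDerivAt (profileLogDeriv a)
      (-2 + 1 / 2 * profile a y ^ 2 + 2 * profileLogDeriv a y ^ 2) y := by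
  have hD := profileDenom_pos ha y
  refine (((hasDerivAt_two_mul y).sinh.const_mul a).fun_neg.div
    (hasDerivAt_profileDenom y) hD.ne').congr_deriv ?_
  rw [profile_sq ha, profileLogDeriv]
  have hcosh : a * cosh (2 * y) = profileDenom a y - 1 := by rw [profileDenom]; ring
  field_simp
  linear_combination -4 * profileDenom a y * hcosh

lemma exp_abs_le_two_mul_cosh (t : ℝ) : exp |t| ≤ 2 * cosh t := by
  rw [← cosh_abs, cosh_eq]
  linarith [exp_pos (-|t|)]

lemma abs_sinh_le_cosh (t : ℝ) : |sinh t| ≤ cosh t := by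
  rw [abs_sinh, ← cosh_abs]
  exact (sinh_lt_cosh _).le

lemma abs_profileLogDeriv_le_one (ha : 0 ≤ a) (y : ℝ) : |profileLogDeriv a y| ≤ 1 := by
  have hD := profileDenom_pos ha y
  rw [profileLogDeriv, abs_div, abs_neg, abs_of_pos hD, div_le_one hD, abs_mul, abs_of_nonneg ha]
  calc a * |sinh (2 * y)| ≤ a * cosh (2 * y) := mul_le_mul_of_nonneg_left (abs_sinh_le_cosh _) ha
    _ ≤ profileDenom a y := by rw [profileDenom]; linarith

lemma abs_profile_le (ha : 1 / 2 ≤ a) (y : ℝ) : |profile a y| ≤ 4 * exp (-|y|) := by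
  have ha₀ : 0 ≤ a := by linarith
  have hD := profileDenom_pos ha₀ y
  have hexp : exp (2 * |y|) ≤ 4 * profileDenom a y := by
    have h := exp_abs_le_two_mul_cosh (2 * y)
    rw [abs_mul, abs_two] at h
    have hc := zero_le_one.trans (one_le_cosh (2 * y))
    rw [profileDenom]
    nlinarith
  refine abs_le_of_sq_le_sq ?_ (by positivity)
  rw [profile_sq ha₀, mul_pow, ← exp_nat_mul, div_le_iff₀ hD]
  calc (4 : ℝ) = 4 * (exp (2 * |y|) * exp (↑2 * -|y|)) := by
        rw [← exp_add]; norm_num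
    _ ≤ 4 ^ 2 * exp (↑2 * -|y|) * profileDenom a y := by
        nlinarith [exp_pos (↑2 * -|y|)]

end Profile

lemma phi_eq_profile {ω : ℝ} (hω : 0 ≤ ω) :
    phi ω = fun x => √ω * profile √(1 - 16 * ω / 3) (√ω * x) := by
  ext x
  rw [phi, profile, profileDenom, sqrt_div (mul_nonneg zero_le_four hω), sqrt_mul zero_le_four,
    show (4 : ℝ) = 2 ^ 2 by norm_num, sqrt_sq zero_le_two]
  ring_nf

lemma iteratedDeriv_phi {ω : ℝ} (hω : 0 ≤ ω) (k : ℕ) (x : ℝ) :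
    iteratedDeriv k (phi ω) x =
      √ω ^ (k + 1) * iteratedDeriv k (profile √(1 - 16 * ω / 3)) (√ω * x) := by
  have h := contDiff_infty.mp (contDiff_profile (sqrt_nonneg (1 - 16 * ω / 3))) k
  rw [phi_eq_profile hω, iteratedDeriv_const_mul_field, iteratedDeriv_comp_const_mul h]
  ring

lemma sqrt_pow_succ_eq_rpow {ω : ℝ} (hω : 0 ≤ ω) (k : ℕ) :
    √ω ^ (k + 1) = ω ^ ((1 + (k : ℝ)) / 2) := by
  rw [sqrt_eq_rpow, ← rpow_natCast, ← rpow_mul hω]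
  push_cast
  ring_nf

theorem stmt_1 :
    ∀ k : ℕ, ∃ C : ℝ, 0 < C ∧
      ∀ ω ∈ Set.Ioc (0 : ℝ) (1 / 8), ∀ x : ℝ,
        |iteratedDeriv k (phi ω) x| ≤
          C * ω ^ ((1 + (k : ℝ)) / 2) * Real.exp (-Real.sqrt ω * |x|) := by
  intro k
  refine ⟨riccatiBound (-2) (1 / 2) 2 4 k,
    (by norm_num : (0 : ℝ) < 4).trans_le (riccatiBound_monotone k.zero_le), ?_⟩
  rintro ω ⟨hω₀, hω₈⟩ x
  set a := √(1 - 16 * ω / 3)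
  have ha : 1 / 2 ≤ a := le_sqrt_of_sq_le (by linarith)
  have ha₀ : 0 ≤ a := by linarith
  have hbound := (abs_iteratedDeriv_le_riccatiBound (contDiff_profile ha₀)
    (contDiff_profileLogDeriv ha₀) (funext fun y => (hasDerivAt_profile ha₀ y).deriv)
    (funext fun y => (hasDerivAt_profileLogDeriv ha₀ y).deriv)
    (fun y => ⟨(exp_pos _).le, exp_le_one_iff.mpr (neg_nonpos.mpr (abs_nonneg y))⟩)
    (abs_profile_le ha) (fun y => (abs_profileLogDeriv_le_one ha₀ y).trans (by norm_num))
    k (√ω * x)).1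
  rw [iteratedDeriv_phi hω₀.le, abs_mul, abs_of_nonneg (by positivity),
    ← sqrt_pow_succ_eq_rpow hω₀.le]
  calc √ω ^ (k + 1) * |iteratedDeriv k (profile a) (√ω * x)|
      ≤ √ω ^ (k + 1) * (riccatiBound (-2) (1 / 2) 2 4 k * exp (-|√ω * x|)) := by gcongr
    _ = _ := by rw [abs_mul, abs_of_nonneg (sqrt_nonneg ω), neg_mul]; ring
end

section
/- For every integer k ≥ 0 there exists a constant C_k > 0 such that for all ω ∈ (0, 1/8] and all x ∈ ℝ, the k-th x-derivative of Λ_ω satisfies |Λ_ω^{(k)}(x)| ≤ C_k ω^{(1+k)/2} (1 + √ω |x|) e^{−√ω |x|}. -/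
open Real

/-- Λ_ω = ω ∂φ_ω/∂ω. -/
noncomputable def Lam (ω x : ℝ) : ℝ := ω * deriv (fun s : ℝ => phi s x) ω

/-!
With `y = √ω x`, `a = a_ω` and `D = 1 + a cosh 2y` one has `φ_ω(x) = 2√ω D^{-1/2}`, and
differentiating in `ω` gives `Λ_ω(x) = √ω · u (1 + c w - y v)` with `u = D^{-1/2}`,
`v = a sinh 2y / D`, `w = a cosh 2y / D` and `c = 8ω/(3 - 16ω)`. These functions satisfy the closed
system `u' = -u v`, `v' = 2w - 2v²`, `w' = 2v - 2v w`, so every `y`-derivative of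
`u (P(v, w, c) + y Q(v, w, c))` is again of this shape, with polynomials `P`, `Q` that do not depend
on `ω`; each `x`-derivative contributes one more factor `√ω`. For `ω ≤ 1/8` the point `(v, w, c)`
stays in the unit cube, where `P` and `Q` are bounded by compactness, and `u ≤ 2 e^{-|y|}`.
-/

namespace MvPolynomial

theorem hasDerivAt_eval_of_derivation {𝕜 σ : Type*} [NontriviallyNormedField 𝕜]
    (D : Derivation 𝕜 (MvPolynomial σ 𝕜) (MvPolynomial σ 𝕜)) {f : 𝕜 → σ → 𝕜} {t : 𝕜}
    (hf : ∀ i, HasDerivAt (fun s => f s i) (eval (f t) (D (X i))) t) (p : MvPolynomial σ 𝕜) :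
    HasDerivAt (fun s => eval (f s) p) (eval (f t) (D p)) t := by
  induction p using MvPolynomial.induction_on with
  | C a => simpa [Derivation.map_algebraMap] using hasDerivAt_const t a
  | add p q hp hq =>
    simp only [map_add]
    exact hp.add hq
  | mul_X p i hp =>
    simp only [map_mul, Derivation.leibniz, smul_eq_mul, eval_X]
    exact (hp.mul (hf i)).congr_deriv (by simp only [map_add, map_mul, eval_X]; ring)

end MvPolynomial

theorem iteratedDeriv_eq_of_hasDerivAt {𝕜 F : Type*} [NontriviallyNormedField 𝕜]
    [NormedAddCommGroup F] [NormedSpace 𝕜 F] {f : ℕ → 𝕜 → F}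
    (hf : ∀ n t, HasDerivAt (f n) (f (n + 1) t) t) (n : ℕ) : iteratedDeriv n (f 0) = f n := by
  induction n with
  | zero => exact iteratedDeriv_zero
  | succ n ih => rw [iteratedDeriv_succ, ih]; exact funext fun t => (hf n t).deriv

namespace CubicQuintic

noncomputable def den (a y : ℝ) : ℝ := 1 + a * cosh (2 * y)
noncomputable def u (a y : ℝ) : ℝ := (√(den a y))⁻¹
noncomputable def v (a y : ℝ) : ℝ := a * sinh (2 * y) / den a y
noncomputable def w (a y : ℝ) : ℝ := a * cosh (2 * y) / den a y

variable {a : ℝ}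

theorem mul_cosh_le_den (a y : ℝ) : a * cosh (2 * y) ≤ den a y := by
  simp [den]

theorem den_pos (ha : 0 ≤ a) (y : ℝ) : 0 < den a y :=
  lt_add_of_pos_of_le one_pos (mul_nonneg ha (cosh_pos _).le)

theorem abs_v_le_one (ha : 0 ≤ a) (y : ℝ) : |v a y| ≤ 1 := by
  rw [v, abs_div, abs_of_pos (den_pos ha y), div_le_one (den_pos ha y), abs_mul, abs_of_nonneg ha]
  calc a * |sinh (2 * y)| ≤ a * cosh (2 * y) := by
        gcongr; rw [abs_sinh, ← cosh_abs (2 * y)]; exact (sinh_lt_cosh _).le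
    _ ≤ den a y := mul_cosh_le_den a y

theorem abs_w_le_one (ha : 0 ≤ a) (y : ℝ) : |w a y| ≤ 1 := by
  rw [w, abs_div, abs_of_pos (den_pos ha y), div_le_one (den_pos ha y),
    abs_of_nonneg (mul_nonneg ha (cosh_pos _).le)]
  exact mul_cosh_le_den a y

theorem u_le_two_mul_exp (ha : 1 / 2 ≤ a) (y : ℝ) : u a y ≤ 2 * exp (-|y|) := by
  have hcosh : exp (2 * |y|) / 2 ≤ cosh (2 * y) := by
    rw [← cosh_abs, abs_mul, abs_two, cosh_eq]
    linarith [exp_pos (-(2 * |y|))]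
  have hden : (exp |y| / 2) ^ 2 ≤ den a y := by
    have : (exp |y| / 2) ^ 2 = 1 / 2 * (exp (2 * |y|) / 2) := by
      rw [div_pow, ← exp_nat_mul]; push_cast; ring
    rw [this]
    calc 1 / 2 * (exp (2 * |y|) / 2) ≤ a * cosh (2 * y) := by gcongr
      _ ≤ den a y := mul_cosh_le_den a y
  calc u a y ≤ (exp |y| / 2)⁻¹ := by
        rw [u]; gcongr; exact le_sqrt_of_sq_le hden
    _ = 2 * exp (-|y|) := by rw [exp_neg]; field_simp

theorem hasDerivAt_den (a y : ℝ) : HasDerivAt (den a) (2 * a * sinh (2 * y)) y := by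
  have := (((hasDerivAt_id' y).const_mul 2).cosh.const_mul a).const_add 1
  exact this.congr_deriv (by ring)

theorem hasDerivAt_u (ha : 0 ≤ a) (y : ℝ) : HasDerivAt (u a) (-(u a y * v a y)) y := by
  have hden := den_pos ha y
  have hsqrt := sqrt_pos.2 hden
  refine (((hasDerivAt_den a y).sqrt hden.ne').inv hsqrt.ne').congr_deriv ?_
  rw [u, v]
  field_simp
  rw [sq_sqrt hden.le]

theorem hasDerivAt_v (ha : 0 ≤ a) (y : ℝ) :
    HasDerivAt (v a) (2 * w a y - 2 * v a y ^ 2) y := by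
  have hden := den_pos ha y
  refine ((((hasDerivAt_id' y).const_mul 2).sinh.const_mul a).div (hasDerivAt_den a y)
    hden.ne').congr_deriv ?_
  rw [v, w]
  field_simp

theorem hasDerivAt_w (ha : 0 ≤ a) (y : ℝ) :
    HasDerivAt (w a) (2 * v a y - 2 * v a y * w a y) y := by
  have hden := den_pos ha y
  refine ((((hasDerivAt_id' y).const_mul 2).cosh.const_mul a).div (hasDerivAt_den a y)
    hden.ne').congr_deriv ?_
  rw [v, w, den]
  field_simp

open MvPolynomial

noncomputable def profileDerivation :
    Derivation ℝ (MvPolynomial (Fin 3) ℝ) (MvPolynomial (Fin 3) ℝ) :=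
  mkDerivation ℝ ![2 * X 1 - 2 * X 0 ^ 2, 2 * X 0 - 2 * X 0 * X 1, 0]

noncomputable def coords (a c y : ℝ) : Fin 3 → ℝ := ![v a y, w a y, c]

abbrev Form := MvPolynomial (Fin 3) ℝ × MvPolynomial (Fin 3) ℝ

noncomputable def decayForm (a c : ℝ) (F : Form) (y : ℝ) : ℝ :=
  u a y * (eval (coords a c y) F.1 + y * eval (coords a c y) F.2)

noncomputable def formDeriv (F : Form) : Form :=
  (profileDerivation F.1 - X 0 * F.1 + F.2, profileDerivation F.2 - X 0 * F.2)

theorem hasDerivAt_eval_coords (ha : 0 ≤ a) (c y : ℝ) (p : MvPolynomial (Fin 3) ℝ) :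
    HasDerivAt (fun s => eval (coords a c s) p) (eval (coords a c y) (profileDerivation p)) y := by
  refine MvPolynomial.hasDerivAt_eval_of_derivation _ (fun i => ?_) p
  fin_cases i
  · simpa [coords, profileDerivation] using hasDerivAt_v ha y
  · simpa [coords, profileDerivation, mul_assoc] using hasDerivAt_w ha y
  · simpa [coords, profileDerivation] using hasDerivAt_const y c

theorem hasDerivAt_decayForm (ha : 0 ≤ a) (c y : ℝ) (F : Form) :
    HasDerivAt (decayForm a c F) (decayForm a c (formDeriv F) y) y := by
  have hP := hasDerivAt_eval_coords ha c y F.1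
  have hQ := hasDerivAt_eval_coords ha c y F.2
  refine ((hasDerivAt_u ha y).mul (hP.add ((hasDerivAt_id' y).mul hQ))).congr_deriv ?_
  simp only [decayForm, formDeriv, coords, Pi.add_apply, Pi.mul_apply, Fin.isValue, map_add,
    map_sub, map_mul, eval_X, Matrix.cons_val_zero]
  ring

theorem norm_coords_le_one (ha : 0 ≤ a) {c : ℝ} (hc : |c| ≤ 1) (y : ℝ) :
    ‖coords a c y‖ ≤ 1 := by
  refine (pi_norm_le_iff_of_nonneg zero_le_one).2 fun i => ?_
  fin_cases i
  · exact abs_v_le_one ha y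
  · exact abs_w_le_one ha y
  · exact hc

theorem exists_abs_decayForm_le (F : Form) :
    ∃ C, 0 < C ∧ ∀ a, 1 / 2 ≤ a → ∀ c, |c| ≤ 1 → ∀ y,
      |decayForm a c F y| ≤ C * (1 + |y|) * exp (-|y|) := by
  obtain ⟨M, hM⟩ := (isCompact_closedBall (0 : Fin 3 → ℝ) 1).exists_bound_of_continuousOn
    (f := fun z => |eval z F.1| + |eval z F.2|)
    ((continuous_eval F.1).abs.add (continuous_eval F.2).abs).continuousOn
  refine ⟨2 * max M 1, by positivity, fun a ha c hc y => ?_⟩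
  have hz : coords a c y ∈ Metric.closedBall 0 1 :=
    mem_closedBall_zero_iff.2 (norm_coords_le_one (by linarith) hc y)
  have hMz := (le_abs_self _).trans ((hM _ hz).trans (le_max_left M 1))
  have hu := u_le_two_mul_exp ha y
  have hu0 : 0 ≤ u a y := inv_nonneg.2 (sqrt_nonneg _)
  calc |decayForm a c F y|
      ≤ u a y * (|eval (coords a c y) F.1| + |y| * |eval (coords a c y) F.2|) := by
        rw [decayForm, abs_mul, abs_of_nonneg hu0, ← abs_mul]
        gcongr
        exact abs_add_le _ _
    _ ≤ 2 * exp (-|y|) * (max M 1 * (1 + |y|)) := by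
        gcongr
        nlinarith [abs_nonneg (eval (coords a c y) F.1), abs_nonneg (eval (coords a c y) F.2),
          abs_nonneg y]
    _ = 2 * max M 1 * (1 + |y|) * exp (-|y|) := by ring

theorem hasDerivAt_phi {ω : ℝ} (hω : 0 < ω) (hω' : ω < 3 / 16) (x : ℝ) :
    HasDerivAt (fun s => phi s x)
      (√ω / ω * u (√(1 - 16 * ω / 3)) (√ω * x) *
        (1 + 8 * ω / (3 - 16 * ω) * w (√(1 - 16 * ω / 3)) (√ω * x)
          - √ω * x * v (√(1 - 16 * ω / 3)) (√ω * x))) ω := by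
  have hr0 : 0 < √ω := sqrt_pos.2 hω
  have ha0 : 0 < √(1 - 16 * ω / 3) := sqrt_pos.2 (by linarith)
  have hr2 : √ω ^ 2 = ω := sq_sqrt hω.le
  have ha2 : √(1 - 16 * ω / 3) ^ 2 = 1 - 16 * ω / 3 := sq_sqrt (by linarith)
  have hden : 0 < 1 + √(1 - 16 * ω / 3) * cosh (2 * √ω * x) := by
    have := cosh_pos (2 * √ω * x); positivity
  have hA : HasDerivAt (fun s => √(1 - 16 * s / 3)) (-(8 / 3) / √(1 - 16 * ω / 3)) ω := by
    refine ((((hasDerivAt_id' ω).const_mul 16).div_const 3).const_sub 1).sqrt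
      (by linarith) |>.congr_deriv ?_
    field_simp; ring
  have hB : HasDerivAt (fun s => cosh (2 * √s * x)) (sinh (2 * √ω * x) * (x / √ω)) ω := by
    refine (((hasDerivAt_sqrt hω.ne').const_mul 2).mul_const x).cosh.congr_deriv ?_
    field_simp
  have hq := (((hasDerivAt_id' ω).const_mul 4).div ((hA.mul hB).const_add 1) hden.ne').sqrt
    (div_pos (by positivity) hden).ne'
  refine hq.congr_deriv ?_
  have hsq : √(4 * ω / (1 + √(1 - 16 * ω / 3) * cosh (2 * √ω * x))) =
      2 * √ω / √(1 + √(1 - 16 * ω / 3) * cosh (2 * √ω * x)) := by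
    rw [sqrt_div (by positivity), sqrt_mul (by norm_num),
      show √(4 : ℝ) = 2 by rw [show (4 : ℝ) = 2 ^ 2 by norm_num, sqrt_sq zero_le_two]]
  have hsD := sq_sqrt hden.le
  have hsD0 := sqrt_pos.2 hden
  simp only [Pi.mul_apply, Pi.div_apply, u, v, w, den, ← mul_assoc]
  rw [hsq]
  have h316 : 3 - 16 * ω = 3 * √(1 - 16 * ω / 3) ^ 2 := by rw [ha2]; ring
  rw [h316]
  clear hq hA hB
  generalize √(1 - 16 * ω / 3) = a at *
  generalize √(1 + a * cosh (2 * √ω * x)) = d at *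
  generalize √ω = r at *
  subst hr2
  rw [← hsD]
  field_simp
  ring

noncomputable def initialForm : Form := (1 + X 2 * X 1, -X 0)

theorem lam_eq_decayForm {ω : ℝ} (hω : 0 < ω) (hω' : ω < 3 / 16) :
    Lam ω = fun x =>
      √ω * decayForm (√(1 - 16 * ω / 3)) (8 * ω / (3 - 16 * ω)) initialForm (√ω * x) := by
  funext x
  rw [Lam, (hasDerivAt_phi hω hω' x).deriv]
  simp only [decayForm, initialForm, coords, map_add, map_mul, map_one, map_neg, eval_X,
    Matrix.cons_val]
  field_simp
  ring

theorem iteratedDeriv_lam {ω : ℝ} (hω : 0 < ω) (hω' : ω < 3 / 16) (k : ℕ) :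
    iteratedDeriv k (Lam ω) = fun x => √ω ^ (k + 1) * decayForm (√(1 - 16 * ω / 3))
      (8 * ω / (3 - 16 * ω)) (formDeriv^[k] initialForm) (√ω * x) := by
  set a := √(1 - 16 * ω / 3)
  set c := 8 * ω / (3 - 16 * ω)
  have hF := iteratedDeriv_eq_of_hasDerivAt
    (f := fun n x => √ω ^ (n + 1) * decayForm a c (formDeriv^[n] initialForm) (√ω * x))
    (fun n t => ?_) k
  · simpa only [lam_eq_decayForm hω hω', zero_add, pow_one, Function.iterate_zero, id] using hF
  have := ((hasDerivAt_decayForm (sqrt_nonneg (1 - 16 * ω / 3)) c (√ω * t)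
    (formDeriv^[n] initialForm)).comp t ((hasDerivAt_id' t).const_mul √ω)).const_mul (√ω ^ (n + 1))
  refine this.congr_deriv ?_
  rw [Function.iterate_succ_apply']
  ring

end CubicQuintic

open CubicQuintic

theorem stmt_2 :
    ∀ k : ℕ, ∃ C : ℝ, 0 < C ∧
      ∀ ω ∈ Set.Ioc (0 : ℝ) (1 / 8), ∀ x : ℝ,
        |iteratedDeriv k (Lam ω) x| ≤
          C * ω ^ ((1 + (k : ℝ)) / 2) * (1 + Real.sqrt ω * |x|) *
            Real.exp (-Real.sqrt ω * |x|) := by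
  intro k
  obtain ⟨C, hC, hbound⟩ := exists_abs_decayForm_le (formDeriv^[k] initialForm)
  refine ⟨C, hC, fun ω ⟨hω, hω8⟩ x => ?_⟩
  have hr : 0 < √ω := sqrt_pos.2 hω
  have ha : 1 / 2 ≤ √(1 - 16 * ω / 3) := by
    rw [le_sqrt (by norm_num) (by linarith)]; linarith
  have hc : |8 * ω / (3 - 16 * ω)| ≤ 1 := by
    rw [abs_of_nonneg (div_nonneg (by linarith) (by linarith)), div_le_one (by linarith)]
    linarith
  have hpow : √ω ^ (k + 1) = ω ^ ((1 + (k : ℝ)) / 2) := by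
    rw [sqrt_eq_rpow, ← rpow_natCast, ← rpow_mul hω.le]; push_cast; ring_nf
  rw [iteratedDeriv_lam hω (by linarith) k, abs_mul, abs_of_pos (pow_pos hr _), hpow]
  have := hbound _ ha _ hc (√ω * x)
  rw [abs_mul, abs_of_pos hr] at this
  calc ω ^ ((1 + (k : ℝ)) / 2) * |decayForm _ _ _ (√ω * x)|
      ≤ ω ^ ((1 + (k : ℝ)) / 2) * (C * (1 + √ω * |x|) * exp (-(√ω * |x|))) := by gcongr
    _ = _ := by rw [neg_mul]; ring
end

section
/- Let R : ℝ → ℝ be a smooth function that never vanishes, and define V₊ = R² + 3R' + R''/R and V₋ = R² − 3R' + R''/R. Then for every smooth function g : ℝ → ℝ and every x ∈ ℝ, the sixth-order differential identity (∂_x − R)(∂_x² − V₊)(∂_x + R) g (x) = (∂_x + R)(∂_x² − V₋)(∂_x − R) g (x) holds, where (∂_x ± R)h denotes h' ± R·h and (∂_x² − V)h denotes h'' − V·h. -/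
/-- The first-order operator (∂_x + R). -/
noncomputable def opP (R h : ℝ → ℝ) : ℝ → ℝ := fun x => deriv h x + R x * h x

/-- The first-order operator (∂_x − R). -/
noncomputable def opM (R h : ℝ → ℝ) : ℝ → ℝ := fun x => deriv h x - R x * h x

/-- The second-order operator (∂_x² − V). -/
noncomputable def opD2 (V h : ℝ → ℝ) : ℝ → ℝ := fun x => deriv (deriv h) x - V x * h x

theorem stmt_5 (R g : ℝ → ℝ) (hR : ContDiff ℝ (⊤ : ℕ∞) R) (hR0 : ∀ x : ℝ, R x ≠ 0)
    (hg : ContDiff ℝ (⊤ : ℕ∞) g) :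
    ∀ x : ℝ,
      opM R (opD2 (fun y => R y ^ 2 + 3 * deriv R y + deriv (deriv R) y / R y) (opP R g)) x =
      opP R (opD2 (fun y => R y ^ 2 - 3 * deriv R y + deriv (deriv R) y / R y) (opM R g)) x := by
  intro x
  have hR' : ContDiff ℝ (⊤:ℕ∞) R := hR.of_le (by simp)
  have hg' : ContDiff ℝ (⊤:ℕ∞) g := hg.of_le (by simp)
  have hRD : Differentiable ℝ R := hR'.differentiable (by norm_num)
  have hR1 : ContDiff ℝ (⊤:ℕ∞) (deriv R) := (contDiff_infty_iff_deriv.mp hR').2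
  have hR1D : Differentiable ℝ (deriv R) := hR1.differentiable (by norm_num)
  have hR2 : ContDiff ℝ (⊤:ℕ∞) (deriv (deriv R)) := (contDiff_infty_iff_deriv.mp hR1).2
  have hR2D : Differentiable ℝ (deriv (deriv R)) := hR2.differentiable (by norm_num)
  have hR3D : Differentiable ℝ (deriv (deriv (deriv R))) :=
    ((contDiff_infty_iff_deriv.mp hR2).2).differentiable (by norm_num)
  have hgD : Differentiable ℝ g := hg'.differentiable (by norm_num)
  have hg1 : ContDiff ℝ (⊤:ℕ∞) (deriv g) := (contDiff_infty_iff_deriv.mp hg').2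
  have hg1D : Differentiable ℝ (deriv g) := hg1.differentiable (by norm_num)
  have hg2 : ContDiff ℝ (⊤:ℕ∞) (deriv (deriv g)) := (contDiff_infty_iff_deriv.mp hg1).2
  have hg2D : Differentiable ℝ (deriv (deriv g)) := hg2.differentiable (by norm_num)
  have hg3D : Differentiable ℝ (deriv (deriv (deriv g))) :=
    ((contDiff_infty_iff_deriv.mp hg2).2).differentiable (by norm_num)
  -- first derivatives of opP/opM
  have hP1 : deriv (opP R g) = fun y => deriv (deriv g) y + (deriv R y * g y + R y * deriv g y) := by
    funext y; unfold opP
    rw [deriv_fun_add (by fun_prop) (by fun_prop), deriv_fun_mul (by fun_prop) (by fun_prop)]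
  have hM1 : deriv (opM R g) = fun y => deriv (deriv g) y - (deriv R y * g y + R y * deriv g y) := by
    funext y; unfold opM
    rw [deriv_fun_sub (by fun_prop) (by fun_prop), deriv_fun_mul (by fun_prop) (by fun_prop)]
  have hP2 : deriv (deriv (opP R g)) = fun y => deriv (deriv (deriv g)) y +
      ((deriv (deriv R) y * g y + deriv R y * deriv g y) +
       (deriv R y * deriv g y + R y * deriv (deriv g) y)) := by
    rw [hP1]; funext y
    rw [deriv_fun_add (by fun_prop) (by fun_prop), deriv_fun_add (by fun_prop) (by fun_prop),
        deriv_fun_mul (by fun_prop) (by fun_prop), deriv_fun_mul (by fun_prop) (by fun_prop)]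
  have hM2 : deriv (deriv (opM R g)) = fun y => deriv (deriv (deriv g)) y -
      ((deriv (deriv R) y * g y + deriv R y * deriv g y) +
       (deriv R y * deriv g y + R y * deriv (deriv g) y)) := by
    rw [hM1]; funext y
    rw [deriv_fun_sub (by fun_prop) (by fun_prop), deriv_fun_add (by fun_prop) (by fun_prop),
        deriv_fun_mul (by fun_prop) (by fun_prop), deriv_fun_mul (by fun_prop) (by fun_prop)]
  have hg4D : Differentiable ℝ (deriv (deriv (deriv (deriv g)))) :=
    ((contDiff_infty_iff_deriv.mp (contDiff_infty_iff_deriv.mp hg2).2).2).differentiable (by norm_num)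
  have hFp : opD2 (fun y => R y ^ 2 + 3 * deriv R y + deriv (deriv R) y / R y) (opP R g) =
      fun y => (deriv (deriv (deriv g)) y +
        ((deriv (deriv R) y * g y + deriv R y * deriv g y) +
         (deriv R y * deriv g y + R y * deriv (deriv g) y))) -
        (R y ^ 2 + 3 * deriv R y + deriv (deriv R) y / R y) * (deriv g y + R y * g y) := by
    funext y; show deriv (deriv (opP R g)) y - _ = _
    rw [hP2]; rfl
  have hFm : opD2 (fun y => R y ^ 2 - 3 * deriv R y + deriv (deriv R) y / R y) (opM R g) =
      fun y => (deriv (deriv (deriv g)) y -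
        ((deriv (deriv R) y * g y + deriv R y * deriv g y) +
         (deriv R y * deriv g y + R y * deriv (deriv g) y))) -
        (R y ^ 2 - 3 * deriv R y + deriv (deriv R) y / R y) * (deriv g y - R y * g y) := by
    funext y; show deriv (deriv (opM R g)) y - _ = _
    rw [hM2]; rfl
  show deriv _ x - R x * _ = deriv _ x + R x * _
  rw [hFp, hFm]
  simp (disch := first | exact hR0 _ | fun_prop (disch := exact hR0 _)) only
    [deriv_fun_add, deriv_fun_sub, deriv_fun_mul, deriv_fun_div, deriv_fun_pow, deriv_const_mul, deriv_const]
  field_simp [hR0 x]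
  ring
end

section
/- For ω ∈ (0, 3/16), define for smooth g : ℝ → ℝ the operators Sg = g' − (φ_ω'/φ_ω) g and S*g = −g' − (φ_ω'/φ_ω) g. Then for every smooth g and every x ∈ ℝ: S*(Sg)(x) = −g''(x) + (ω − φ_ω(x)² + φ_ω(x)⁴) g(x) and S(S*g)(x) = −g''(x) + (ω − (1/3)φ_ω(x)⁴) g(x); that is, S*S = L₋ and SS* = M₊. -/
open Real

/-- S g = g' − (φ_ω'/φ_ω) g. -/
noncomputable def opS (ω : ℝ) (g : ℝ → ℝ) : ℝ → ℝ :=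
  fun x => deriv g x - (deriv (phi ω) x / phi ω x) * g x

/-- S* g = −g' − (φ_ω'/φ_ω) g. -/
noncomputable def opSstar (ω : ℝ) (g : ℝ → ℝ) : ℝ → ℝ :=
  fun x => -deriv g x - (deriv (phi ω) x / phi ω x) * g x

/-! Auxiliary definitions: `DD` is the denominator inside the square root,
`ND` its derivative, `uu = φ'/φ`, and `EE = (φ'/φ)'`. -/

noncomputable def DD (ω x : ℝ) : ℝ :=
  1 + Real.sqrt (1 - 16 * ω / 3) * Real.cosh (2 * Real.sqrt ω * x)

noncomputable def ND (ω x : ℝ) : ℝ :=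
  Real.sqrt (1 - 16 * ω / 3) * (2 * Real.sqrt ω) * Real.sinh (2 * Real.sqrt ω * x)

noncomputable def uu (ω x : ℝ) : ℝ := -ND ω x / (2 * DD ω x)

noncomputable def EE (ω x : ℝ) : ℝ :=
  (-(Real.sqrt (1 - 16 * ω / 3) * (2 * Real.sqrt ω) *
      ((2 * Real.sqrt ω) * Real.cosh (2 * Real.sqrt ω * x))) * (2 * DD ω x)
    - (-ND ω x) * (2 * ND ω x)) / (2 * DD ω x) ^ 2

lemma DD_pos (ω x : ℝ) : 0 < DD ω x := by
  have h1 : 0 ≤ Real.sqrt (1 - 16 * ω / 3) * Real.cosh (2 * Real.sqrt ω * x) :=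
    mul_nonneg (Real.sqrt_nonneg _) (Real.cosh_pos _).le
  unfold DD; linarith

lemma phi_eq (ω x : ℝ) : phi ω x = Real.sqrt (4 * ω / DD ω x) := rfl

lemma phi_pos {ω : ℝ} (hω1 : 0 < ω) (x : ℝ) : 0 < phi ω x := by
  rw [phi_eq]
  exact Real.sqrt_pos.2 (div_pos (by linarith) (DD_pos ω x))

lemma phi_sq {ω : ℝ} (hω1 : 0 < ω) (x : ℝ) : phi ω x ^ 2 = 4 * ω / DD ω x := by
  rw [phi_eq]
  exact Real.sq_sqrt (le_of_lt (div_pos (by linarith) (DD_pos ω x)))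

lemma hasDerivAt_DD (ω x : ℝ) : HasDerivAt (DD ω) (ND ω x) x := by
  have h : HasDerivAt (fun y : ℝ => 1 + Real.sqrt (1 - 16 * ω / 3) *
      Real.cosh (2 * Real.sqrt ω * y))
      (Real.sqrt (1 - 16 * ω / 3) * (Real.sinh (2 * Real.sqrt ω * x) * (2 * Real.sqrt ω * 1))) x :=
    ((((hasDerivAt_id x).const_mul (2 * Real.sqrt ω)).cosh).const_mul _).const_add 1
  have h2 : Real.sqrt (1 - 16 * ω / 3) * (Real.sinh (2 * Real.sqrt ω * x) * (2 * Real.sqrt ω * 1))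
      = ND ω x := by unfold ND; ring
  rw [h2] at h
  exact h

lemma hasDerivAt_phi {ω : ℝ} (hω1 : 0 < ω) (x : ℝ) :
    HasDerivAt (phi ω) (uu ω x * phi ω x) x := by
  have hD := DD_pos ω x
  have hF : HasDerivAt (fun y => 4 * ω / DD ω y)
      ((0 * DD ω x - 4 * ω * ND ω x) / DD ω x ^ 2) x :=
    (hasDerivAt_const x (4 * ω)).div (hasDerivAt_DD ω x) (ne_of_gt hD)
  have hFx : (4 * ω / DD ω x) ≠ 0 := ne_of_gt (div_pos (by linarith) hD)
  have h := hF.sqrt hFx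
  have hfun : (fun y => Real.sqrt (4 * ω / DD ω y)) = phi ω := by
    funext y; rw [phi_eq]
  rw [hfun] at h
  have hval : (0 * DD ω x - 4 * ω * ND ω x) / DD ω x ^ 2 / (2 * Real.sqrt (4 * ω / DD ω x))
      = uu ω x * phi ω x := by
    rw [← phi_eq]
    have hφ := phi_pos hω1 x
    have hφ2 := phi_sq hω1 x
    have hφ2' : phi ω x ^ 2 * DD ω x = 4 * ω := by
      rw [hφ2]; field_simp
    unfold uu
    rw [div_div, div_mul_eq_mul_div,
      div_eq_div_iff (ne_of_gt (mul_pos (pow_pos hD 2) (mul_pos two_pos hφ)))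
        (ne_of_gt (mul_pos two_pos hD))]
    linear_combination (2 * ND ω x * DD ω x) * hφ2'
  rw [hval] at h
  exact h

lemma uu_eq {ω : ℝ} (hω1 : 0 < ω) (x : ℝ) :
    deriv (phi ω) x / phi ω x = uu ω x := by
  rw [(hasDerivAt_phi hω1 x).deriv]
  exact mul_div_cancel_right₀ _ (ne_of_gt (phi_pos hω1 x))

lemma hasDerivAt_uu (ω x : ℝ) : HasDerivAt (uu ω) (EE ω x) x := by
  have hnum : HasDerivAt (fun y => -ND ω y)
      (-(Real.sqrt (1 - 16 * ω / 3) * (2 * Real.sqrt ω) *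
        ((2 * Real.sqrt ω) * Real.cosh (2 * Real.sqrt ω * x)))) x := by
    have h : HasDerivAt (fun y : ℝ => Real.sqrt (1 - 16 * ω / 3) * (2 * Real.sqrt ω) *
        Real.sinh (2 * Real.sqrt ω * y))
        (Real.sqrt (1 - 16 * ω / 3) * (2 * Real.sqrt ω) *
          (Real.cosh (2 * Real.sqrt ω * x) * (2 * Real.sqrt ω * 1))) x :=
      (((hasDerivAt_id x).const_mul (2 * Real.sqrt ω)).sinh).const_mul _
    have h2 : Real.sqrt (1 - 16 * ω / 3) * (2 * Real.sqrt ω) *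
        (Real.cosh (2 * Real.sqrt ω * x) * (2 * Real.sqrt ω * 1))
        = Real.sqrt (1 - 16 * ω / 3) * (2 * Real.sqrt ω) *
          ((2 * Real.sqrt ω) * Real.cosh (2 * Real.sqrt ω * x)) := by ring
    rw [h2] at h
    exact (h.neg : _)
  have hden : HasDerivAt (fun y => 2 * DD ω y) (2 * ND ω x) x :=
    (hasDerivAt_DD ω x).const_mul 2
  have hd0 : 2 * DD ω x ≠ 0 := by have := DD_pos ω x; positivity
  exact hnum.div hden hd0

/-! The two key algebraic identities. -/

lemma key_facts {ω : ℝ} (hω1 : 0 < ω) (hω2 : ω < 3 / 16) (x : ℝ) :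
    ND ω x ^ 2 = 4 * ω * ((DD ω x - 1) ^ 2 - (1 - 16 * ω / 3)) ∧
    Real.sqrt (1 - 16 * ω / 3) * (2 * Real.sqrt ω) *
      ((2 * Real.sqrt ω) * Real.cosh (2 * Real.sqrt ω * x)) = 4 * ω * (DD ω x - 1) := by
  have hr2 : Real.sqrt ω ^ 2 = ω := Real.sq_sqrt hω1.le
  have ha2 : Real.sqrt (1 - 16 * ω / 3) ^ 2 = 1 - 16 * ω / 3 :=
    Real.sq_sqrt (by linarith)
  have hch : Real.cosh (2 * Real.sqrt ω * x) ^ 2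
      = Real.sinh (2 * Real.sqrt ω * x) ^ 2 + 1 := Real.cosh_sq _
  have he1 : Real.sqrt (1 - 16 * ω / 3) * Real.cosh (2 * Real.sqrt ω * x) = DD ω x - 1 := by
    unfold DD; ring
  constructor
  · unfold ND
    linear_combination (4 * Real.sqrt (1 - 16 * ω / 3) ^ 2 *
        Real.sinh (2 * Real.sqrt ω * x) ^ 2) * hr2 +
      (-4 * ω * Real.sqrt (1 - 16 * ω / 3) ^ 2) * hch +
      (4 * ω * (Real.sqrt (1 - 16 * ω / 3) * Real.cosh (2 * Real.sqrt ω * x) + DD ω x - 1)) * he1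
      + (-4 * ω) * ha2
  · linear_combination (4 * Real.sqrt (1 - 16 * ω / 3) * Real.cosh (2 * Real.sqrt ω * x)) * hr2
      + (4 * ω) * he1

lemma EE_id1 {ω : ℝ} (hω1 : 0 < ω) (hω2 : ω < 3 / 16) (x : ℝ) :
    EE ω x = ω - phi ω x ^ 2 + phi ω x ^ 4 - uu ω x ^ 2 := by
  obtain ⟨e2, e3⟩ := key_facts hω1 hω2 x
  have hD := DD_pos ω x
  have hd0 : DD ω x ≠ 0 := ne_of_gt hD
  have hphi2 := phi_sq hω1 x
  have hphi4 : phi ω x ^ 4 = (4 * ω / DD ω x) ^ 2 := by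
    rw [show (4 : ℕ) = 2 * 2 by norm_num, pow_mul, hphi2]
  have hEE : EE ω x = 2 * ω * (16 * ω / 3 - DD ω x) / DD ω x ^ 2 := by
    unfold EE
    rw [e3, show (-ND ω x) * (2 * ND ω x) = -(2 * ND ω x ^ 2) from by ring, e2]
    rw [div_eq_div_iff (by positivity : ((2 : ℝ) * DD ω x) ^ 2 ≠ 0)
      (by positivity : DD ω x ^ 2 ≠ 0)]
    ring
  have huu : uu ω x ^ 2 = 4 * ω * ((DD ω x - 1) ^ 2 - (1 - 16 * ω / 3)) / (2 * DD ω x) ^ 2 := by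
    unfold uu
    rw [div_pow, neg_sq, e2]
  rw [hphi2, hphi4, hEE, huu]
  field_simp
  ring

lemma EE_id2 {ω : ℝ} (hω1 : 0 < ω) (hω2 : ω < 3 / 16) (x : ℝ) :
    EE ω x = uu ω x ^ 2 - ω + (1 / 3) * phi ω x ^ 4 := by
  obtain ⟨e2, e3⟩ := key_facts hω1 hω2 x
  have hD := DD_pos ω x
  have hd0 : DD ω x ≠ 0 := ne_of_gt hD
  have hphi2 := phi_sq hω1 x
  have hphi4 : phi ω x ^ 4 = (4 * ω / DD ω x) ^ 2 := by
    rw [show (4 : ℕ) = 2 * 2 by norm_num, pow_mul, hphi2]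
  have hEE : EE ω x = 2 * ω * (16 * ω / 3 - DD ω x) / DD ω x ^ 2 := by
    unfold EE
    rw [e3, show (-ND ω x) * (2 * ND ω x) = -(2 * ND ω x ^ 2) from by ring, e2]
    rw [div_eq_div_iff (by positivity : ((2 : ℝ) * DD ω x) ^ 2 ≠ 0)
      (by positivity : DD ω x ^ 2 ≠ 0)]
    ring
  have huu : uu ω x ^ 2 = 4 * ω * ((DD ω x - 1) ^ 2 - (1 - 16 * ω / 3)) / (2 * DD ω x) ^ 2 := by
    unfold uu
    rw [div_pow, neg_sq, e2]
  rw [hphi4, hEE, huu]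
  field_simp
  ring

theorem stmt_7 :
    ∀ ω ∈ Set.Ioo (0 : ℝ) (3 / 16), ∀ g : ℝ → ℝ, ContDiff ℝ (⊤ : ℕ∞) g →
      ∀ x : ℝ,
        opSstar ω (opS ω g) x
            = -deriv (deriv g) x + (ω - (phi ω x) ^ 2 + (phi ω x) ^ 4) * g x ∧
        opS ω (opSstar ω g) x
            = -deriv (deriv g) x + (ω - (1 / 3) * (phi ω x) ^ 4) * g x := by
  rintro ω ⟨hω1, hω2⟩ g hg x
  have hgd : Differentiable ℝ g := hg.differentiable (by simp)
  have hgd2 : Differentiable ℝ (deriv g) := by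
    have h := (contDiff_infty_iff_deriv.mp (hg.of_le (by simp))).2
    exact h.differentiable (by simp)
  have hSrw : opS ω g = fun y => deriv g y - uu ω y * g y := by
    funext y; unfold opS; rw [uu_eq hω1 y]
  have hSstarrw : opSstar ω g = fun y => -deriv g y - uu ω y * g y := by
    funext y; unfold opSstar; rw [uu_eq hω1 y]
  have hdS : HasDerivAt (fun y => deriv g y - uu ω y * g y)
      (deriv (deriv g) x - (EE ω x * g x + uu ω x * deriv g x)) x :=
    ((hgd2 x).hasDerivAt).sub ((hasDerivAt_uu ω x).mul (hgd x).hasDerivAt)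
  have hdSstar : HasDerivAt (fun y => -deriv g y - uu ω y * g y)
      (-deriv (deriv g) x - (EE ω x * g x + uu ω x * deriv g x)) x :=
    ((hgd2 x).hasDerivAt).neg.sub ((hasDerivAt_uu ω x).mul (hgd x).hasDerivAt)
  have hderS : deriv (opS ω g) x
      = deriv (deriv g) x - (EE ω x * g x + uu ω x * deriv g x) := by
    rw [hSrw]; exact hdS.deriv
  have hderSstar : deriv (opSstar ω g) x
      = -deriv (deriv g) x - (EE ω x * g x + uu ω x * deriv g x) := by
    rw [hSstarrw]; exact hdSstar.deriv
  have hid1 := EE_id1 hω1 hω2 x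
  have hid2 := EE_id2 hω1 hω2 x
  constructor
  · show -deriv (opS ω g) x - (deriv (phi ω) x / phi ω x) * opS ω g x = _
    rw [uu_eq hω1 x, hderS, show opS ω g x = deriv g x - uu ω x * g x from by
      rw [hSrw]]
    linear_combination g x * hid1
  · show deriv (opSstar ω g) x - (deriv (phi ω) x / phi ω x) * opSstar ω g x = _
    rw [uu_eq hω1 x, hderSstar, show opSstar ω g x = -deriv g x - uu ω x * g x from by
      rw [hSstarrw]]
    linear_combination (-(g x)) * hid2
end

section
/- There exists c > 0 such that for every ω ∈ (0, 1/8], every B ≥ 1, every admissible cutoff χ, and every x ∈ ℝ with 1 ≤ √ω |x| ≤ 2, one has P_B(x) ≥ c ω². -/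
open Real MeasureTheory intervalIntegral

/-- An admissible cutoff: smooth, even, equal to 1 on [0,1], 0 on [2,∞),
with nonpositive derivative on [0,∞). -/
def AdmissibleCutoff (χ : ℝ → ℝ) : Prop :=
  ContDiff ℝ (⊤ : ℕ∞) χ ∧ (∀ x : ℝ, χ (-x) = χ x) ∧
  (∀ x ∈ Set.Icc (0 : ℝ) 1, χ x = 1) ∧
  (∀ x : ℝ, 2 ≤ x → χ x = 0) ∧
  (∀ x : ℝ, 0 ≤ x → deriv χ x ≤ 0)

/-- ζ_B(x) = exp(−(ω√ω/B)|x|(1 − χ(√ω x))). -/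
noncomputable def zetaB (ω B : ℝ) (χ : ℝ → ℝ) (x : ℝ) : ℝ :=
  Real.exp (-(ω * Real.sqrt ω / B) * |x| * (1 - χ (Real.sqrt ω * x)))

/-- Φ_B(x) = ∫₀ˣ ζ_B(y)² dy. -/
noncomputable def PhiB (ω B : ℝ) (χ : ℝ → ℝ) (x : ℝ) : ℝ :=
  ∫ y in (0 : ℝ)..x, (zetaB ω B χ y) ^ 2

/-- P_B(x) = −(1/3)(Φ_B(x)/ζ_B(x)²) (φ_ω⁴)'(x). -/
noncomputable def PB (ω B : ℝ) (χ : ℝ → ℝ) (x : ℝ) : ℝ :=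
  -(1 / 3) * (PhiB ω B χ x / (zetaB ω B χ x) ^ 2) *
    deriv (fun y => (phi ω y) ^ 4) x

lemma deriv_phi4 (ω : ℝ) (hω : 0 ≤ ω) (x : ℝ) :
    deriv (fun y => (phi ω y) ^ 4) x =
      -(64 * ω ^ 2 * Real.sqrt ω * Real.sqrt (1 - 16 * ω / 3)
          * Real.sinh (2 * Real.sqrt ω * x))
        / (1 + Real.sqrt (1 - 16 * ω / 3) * Real.cosh (2 * Real.sqrt ω * x)) ^ 3 := by
  set a := Real.sqrt (1 - 16 * ω / 3) with ha
  set r := 2 * Real.sqrt ω with hr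
  have ha0 : 0 ≤ a := Real.sqrt_nonneg _
  have hg : ∀ y : ℝ, 0 < 1 + a * Real.cosh (r * y) := fun y => by
    have := Real.cosh_pos (x := r * y)
    nlinarith
  have hrw : (fun y => (phi ω y) ^ 4) = fun y =>
      (4 * ω) ^ 2 / (1 + a * Real.cosh (r * y)) ^ 2 := by
    funext y
    have hnn : 0 ≤ 4 * ω / (1 + a * Real.cosh (r * y)) := by positivity
    rw [phi, show (Real.sqrt (4 * ω / (1 + a * Real.cosh (r * y)))) ^ 4
        = ((Real.sqrt (4 * ω / (1 + a * Real.cosh (r * y)))) ^ 2) ^ 2 by ring,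
      Real.sq_sqrt hnn, div_pow]
  rw [hrw]
  have hc : HasDerivAt (fun y : ℝ => Real.cosh (r * y)) (Real.sinh (r * x) * r) x := by
    have h1 : HasDerivAt (fun y : ℝ => r * y) r x := by
      simpa using (hasDerivAt_id x).const_mul r
    exact (Real.hasDerivAt_cosh (r * x)).comp x h1
  have hg' : HasDerivAt (fun y : ℝ => 1 + a * Real.cosh (r * y))
      (a * (Real.sinh (r * x) * r)) x := (hc.const_mul a).const_add 1
  have hD : HasDerivAt (fun y : ℝ => (1 + a * Real.cosh (r * y)) ^ 2)
      (2 * (1 + a * Real.cosh (r * x)) ^ 1 * (a * (Real.sinh (r * x) * r))) x := hg'.pow 2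
  have hne : (1 + a * Real.cosh (r * x)) ^ 2 ≠ 0 := by positivity
  have hF := (hasDerivAt_const x ((4 * ω) ^ 2)).div hD hne
  rw [(show HasDerivAt (fun y : ℝ => (4 * ω) ^ 2 / (1 + a * Real.cosh (r * y)) ^ 2) _ x from hF).deriv]
  have hgx := (hg x).ne'
  have hω2 : Real.sqrt ω ^ 2 = ω := Real.sq_sqrt hω
  field_simp
  ring_nf
  rw [hr]; ring

lemma chi_le_one {χ : ℝ → ℝ} (hχ : AdmissibleCutoff χ) {t : ℝ} (ht : 0 ≤ t) : χ t ≤ 1 := by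
  obtain ⟨hsm, heven, hone, hzero, hder⟩ := hχ
  have hanti : AntitoneOn χ (Set.Ici (0:ℝ)) := by
    apply antitoneOn_of_deriv_nonpos (convex_Ici 0) hsm.continuous.continuousOn
      (hsm.differentiable (by simp)).differentiableOn
    intro y hy
    rw [interior_Ici] at hy
    exact hder y hy.le
  have := hanti (Set.mem_Ici.2 le_rfl) (Set.mem_Ici.2 ht) ht
  rw [hone 0 (by norm_num)] at this
  exact this

lemma chi_le_one' {χ : ℝ → ℝ} (hχ : AdmissibleCutoff χ) (t : ℝ) : χ t ≤ 1 := by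
  rcases le_total 0 t with h | h
  · exact chi_le_one hχ h
  · have h2 : χ t = χ (-t) := by rw [← hχ.2.1 (-t), neg_neg]
    rw [h2]; exact chi_le_one hχ (by linarith)

lemma zetaB_pos (ω B : ℝ) (χ : ℝ → ℝ) (x : ℝ) : 0 < zetaB ω B χ x := Real.exp_pos _

lemma zetaB_le_one {ω B : ℝ} (hω : 0 ≤ ω) (hB : 0 < B) {χ : ℝ → ℝ}
    (hχ : AdmissibleCutoff χ) (x : ℝ) : zetaB ω B χ x ≤ 1 := by
  rw [zetaB]
  apply Real.exp_le_one_iff.2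
  have h1 : 0 ≤ 1 - χ (Real.sqrt ω * x) := by linarith [chi_le_one' hχ (Real.sqrt ω * x)]
  have h2 : 0 ≤ ω * Real.sqrt ω / B := by positivity
  have := mul_nonneg (mul_nonneg h2 (abs_nonneg x)) h1
  linarith

lemma zetaB_cont (ω B : ℝ) (χ : ℝ → ℝ) (hc : Continuous χ) : Continuous (zetaB ω B χ) := by
  unfold zetaB
  fun_prop

lemma zetaB_eq_one {ω : ℝ} (B : ℝ) {χ : ℝ → ℝ} (hχ : AdmissibleCutoff χ) {y : ℝ}
    (h : |Real.sqrt ω * y| ≤ 1) : zetaB ω B χ y = 1 := by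
  have hone : χ (Real.sqrt ω * y) = 1 := by
    rcases le_total 0 (Real.sqrt ω * y) with h' | h'
    · exact hχ.2.2.1 _ ⟨h', by rwa [abs_of_nonneg h'] at h⟩
    · rw [← hχ.2.1]
      exact hχ.2.2.1 _ ⟨by linarith, by rwa [abs_of_nonpos h'] at h⟩
  rw [zetaB, hone]
  simp

lemma PhiB_ge {ω B : ℝ} {χ : ℝ → ℝ} (hχ : AdmissibleCutoff χ) (hc : Continuous χ)
    {s x : ℝ} (hs : 0 ≤ s) (hs1 : Real.sqrt ω * s = 1) (hx : s ≤ x) :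
    s ≤ PhiB ω B χ x := by
  have hint : ∀ u v : ℝ, IntervalIntegrable (fun y => (zetaB ω B χ y) ^ 2) volume u v :=
    fun u v => (((zetaB_cont ω B χ hc).pow 2)).intervalIntegrable u v
  have hsplit : PhiB ω B χ x = (∫ y in (0:ℝ)..s, (zetaB ω B χ y) ^ 2)
      + ∫ y in s..x, (zetaB ω B χ y) ^ 2 := by
    rw [PhiB, ← intervalIntegral.integral_add_adjacent_intervals (hint 0 s) (hint s x)]
  have h1 : (∫ y in (0:ℝ)..s, (zetaB ω B χ y) ^ 2) = s := by
    rw [intervalIntegral.integral_congr (g := fun _ => (1:ℝ))]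
    · simp
    · intro y hy
      rw [Set.uIcc_of_le hs] at hy
      have hsω : 0 ≤ Real.sqrt ω := Real.sqrt_nonneg _
      have : |Real.sqrt ω * y| ≤ 1 := by
        rw [abs_of_nonneg (mul_nonneg hsω hy.1)]
        calc Real.sqrt ω * y ≤ Real.sqrt ω * s := by
              exact mul_le_mul_of_nonneg_left hy.2 hsω
          _ = 1 := hs1
      show zetaB ω B χ y ^ 2 = 1
      rw [zetaB_eq_one B hχ this]; norm_num
  have h2 : 0 ≤ ∫ y in s..x, (zetaB ω B χ y) ^ 2 :=
    intervalIntegral.integral_nonneg hx (fun y _ => by positivity)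
  linarith [hsplit, h1, h2]

lemma PhiB_le {ω B : ℝ} {χ : ℝ → ℝ} (hχ : AdmissibleCutoff χ) (hc : Continuous χ)
    {s x : ℝ} (hs : 0 ≤ s) (hs1 : Real.sqrt ω * s = 1) (hx : x ≤ -s) :
    PhiB ω B χ x ≤ -s := by
  have hint : ∀ u v : ℝ, IntervalIntegrable (fun y => (zetaB ω B χ y) ^ 2) volume u v :=
    fun u v => (((zetaB_cont ω B χ hc).pow 2)).intervalIntegrable u v
  have hsplit : PhiB ω B χ x = (∫ y in (0:ℝ)..(-s), (zetaB ω B χ y) ^ 2)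
      + ∫ y in (-s)..x, (zetaB ω B χ y) ^ 2 := by
    rw [PhiB, ← intervalIntegral.integral_add_adjacent_intervals (hint 0 (-s)) (hint (-s) x)]
  have h1 : (∫ y in (0:ℝ)..(-s), (zetaB ω B χ y) ^ 2) = -s := by
    rw [intervalIntegral.integral_congr (g := fun _ => (1:ℝ))]
    · simp
    · intro y hy
      rw [Set.uIcc_of_ge (by linarith : -s ≤ (0:ℝ))] at hy
      have hsω : 0 ≤ Real.sqrt ω := Real.sqrt_nonneg _
      have hy2 : y ≤ 0 := hy.2
      have hy1 : -s ≤ y := hy.1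
      have : |Real.sqrt ω * y| ≤ 1 := by
        rw [abs_of_nonpos (mul_nonpos_of_nonneg_of_nonpos hsω hy2)]
        have : Real.sqrt ω * (-s) ≤ Real.sqrt ω * y := mul_le_mul_of_nonneg_left hy1 hsω
        rw [mul_neg, hs1] at this
        linarith
      show zetaB ω B χ y ^ 2 = 1
      rw [zetaB_eq_one B hχ this]; norm_num
  have h2 : (∫ y in (-s)..x, (zetaB ω B χ y) ^ 2) ≤ 0 := by
    rw [intervalIntegral.integral_symm]
    have : 0 ≤ ∫ y in x..(-s), (zetaB ω B χ y) ^ 2 :=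
      intervalIntegral.integral_nonneg hx (fun y _ => by positivity)
    linarith
  linarith [hsplit, h1, h2]

set_option maxHeartbeats 1000000 in
theorem stmt_14 :
    ∃ c : ℝ, 0 < c ∧
      ∀ ω ∈ Set.Ioc (0 : ℝ) (1 / 8), ∀ B : ℝ, 1 ≤ B →
        ∀ χ : ℝ → ℝ, AdmissibleCutoff χ →
          ∀ x : ℝ, 1 ≤ Real.sqrt ω * |x| → Real.sqrt ω * |x| ≤ 2 →
            c * ω ^ 2 ≤ PB ω B χ x := by
  have hs2 : 0 < Real.sinh 2 := Real.sinh_pos_iff.2 (by norm_num)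
  have hc4 : 0 < Real.cosh 4 := Real.cosh_pos 4
  refine ⟨32 * Real.sinh 2 / (3 * (1 + Real.cosh 4) ^ 3), by positivity, ?_⟩
  rintro ω ⟨hω, hω8⟩ B hB χ hχ x h1 h2
  have hsω : 0 < Real.sqrt ω := Real.sqrt_pos.2 hω
  set a := Real.sqrt (1 - 16 * ω / 3) with ha
  have ha0 : 0 ≤ a := Real.sqrt_nonneg _
  have haL : (1/2 : ℝ) ≤ a := by
    rw [ha]
    rw [Real.le_sqrt (by norm_num) (by linarith)]
    nlinarith
  have haU : a ≤ 1 := Real.sqrt_le_one.2 (by linarith)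
  set S := Real.sinh (2 * Real.sqrt ω * x) with hS
  set g := 1 + a * Real.cosh (2 * Real.sqrt ω * x) with hg
  have hcosh_pos : 0 < Real.cosh (2 * Real.sqrt ω * x) := Real.cosh_pos _
  have hg1 : 1 ≤ g := by nlinarith
  have hgU : g ≤ 1 + Real.cosh 4 := by
    have habs : |2 * Real.sqrt ω * x| ≤ |(4:ℝ)| := by
      rw [abs_mul, abs_mul]
      rw [abs_of_nonneg (by norm_num : (0:ℝ) ≤ 2), abs_of_nonneg hsω.le]
      rw [abs_of_nonneg (by norm_num : (0:ℝ) ≤ 4)]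
      nlinarith
    have := Real.cosh_le_cosh.2 habs
    nlinarith
  set Z := (zetaB ω B χ x) ^ 2 with hZ
  have hZpos : 0 < Z := pow_pos (zetaB_pos ω B χ x) 2
  have hZle : Z ≤ 1 := by
    have := zetaB_le_one hω.le (by linarith : (0:ℝ) < B) hχ x
    have := (zetaB_pos ω B χ x).le
    nlinarith
  set P := PhiB ω B χ x with hP
  set s := 1 / Real.sqrt ω with hsdef
  have hs_pos : 0 < s := by rw [hsdef]; exact div_pos one_pos hsω
  have hs1 : Real.sqrt ω * s = 1 := by
    rw [hsdef]; field_simp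
  -- key product bound
  have hkey : Real.sinh 2 * s ≤ (P / Z) * S := by
    rcases le_total 0 x with hx0 | hx0
    · -- x ≥ 0
      have habs : |x| = x := abs_of_nonneg hx0
      rw [habs] at h1 h2
      have hxs : s ≤ x := by
        rw [hsdef, div_le_iff₀ hsω]
        nlinarith
      have hPge : s ≤ P := PhiB_ge hχ hχ.1.continuous hs_pos.le hs1 hxs
      have hPZ : s ≤ P / Z := by
        rw [le_div_iff₀ hZpos]
        nlinarith [mul_le_of_le_one_right hs_pos.le hZle]
      have hSge : Real.sinh 2 ≤ S := by
        rw [hS]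
        apply Real.sinh_le_sinh.2
        nlinarith
      calc Real.sinh 2 * s = s * Real.sinh 2 := by ring
        _ ≤ (P / Z) * S := mul_le_mul hPZ hSge hs2.le (le_trans hs_pos.le hPZ)
    · -- x ≤ 0
      have habs : |x| = -x := abs_of_nonpos hx0
      rw [habs] at h1 h2
      have hxs : x ≤ -s := by
        have : s ≤ -x := by
          rw [hsdef, div_le_iff₀ hsω]
          nlinarith
        linarith
      have hPle : P ≤ -s := PhiB_le hχ hχ.1.continuous hs_pos.le hs1 hxs
      have hPZ : P / Z ≤ -s := by
        rw [div_le_iff₀ hZpos]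
        nlinarith [mul_le_of_le_one_right hs_pos.le hZle]
      have hSle : S ≤ -Real.sinh 2 := by
        have h24 : 2 * Real.sqrt ω * x ≤ -2 := by nlinarith
        have := Real.sinh_le_sinh.2 h24
        rw [hS]
        rw [show ((-2:ℝ)) = -(2:ℝ) by norm_num, Real.sinh_neg] at this
        linarith
      nlinarith [mul_nonneg (by linarith : (0:ℝ) ≤ -s - P / Z)
        (by linarith : (0:ℝ) ≤ -Real.sinh 2 - S)]
  -- rewrite PB
  have hPB : PB ω B χ x = 64 / 3 * ω ^ 2 * (Real.sqrt ω * a * ((P / Z) * S) / g ^ 3) := by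
    rw [PB, deriv_phi4 ω hω.le x, ← ha, ← hS, ← hg, ← hZ, ← hP]
    ring
  rw [hPB]
  -- final chain
  have hnum : Real.sinh 2 / 2 ≤ Real.sqrt ω * a * ((P / Z) * S) := by
    have hss : Real.sinh 2 * s = Real.sinh 2 / Real.sqrt ω := by
      rw [hsdef]; ring
    have hkey2 : Real.sinh 2 / Real.sqrt ω ≤ (P / Z) * S := by
      rw [← hss]; exact hkey
    have h3 : Real.sinh 2 ≤ Real.sqrt ω * ((P / Z) * S) := by
      have := mul_le_mul_of_nonneg_left hkey2 hsω.le
      rwa [mul_div_cancel₀ _ hsω.ne'] at this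
    nlinarith [mul_nonneg (by linarith : (0:ℝ) ≤ a - 1/2)
      (by nlinarith : (0:ℝ) ≤ Real.sqrt ω * ((P / Z) * S))]
  have hdiv : Real.sinh 2 / 2 / (1 + Real.cosh 4) ^ 3
      ≤ Real.sqrt ω * a * ((P / Z) * S) / g ^ 3 := by
    apply div_le_div₀ (by linarith) hnum (by positivity)
    exact pow_le_pow_left₀ (by linarith) hgU 3
  have h31 : ((1 + Real.cosh 4) ^ 3 : ℝ) ≠ 0 := by positivity
  calc 32 * Real.sinh 2 / (3 * (1 + Real.cosh 4) ^ 3) * ω ^ 2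
      = 64 / 3 * ω ^ 2 * (Real.sinh 2 / 2 / (1 + Real.cosh 4) ^ 3) := by
        field_simp
        ring
    _ ≤ 64 / 3 * ω ^ 2 * (Real.sqrt ω * a * ((P / Z) * S) / g ^ 3) := by
        apply mul_le_mul_of_nonneg_left hdiv (by positivity)
end

section
/- There exists B₀ ≥ 1 such that for every B ≥ B₀ and every y ∈ ℝ: (i) 0 ≤ y sinh(y) e^{|y|/(4B)} ≤ (1/3) (1 + cosh(y)/√3)³, and (ii) |y| e^{|y|/(4B)} ≤ (2/3) |sinh(y)| (1 + cosh(y)/√3). -/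
/-!
Convexity of `exp` gives `exp (ε t) ≤ 1 + ε (exp t - 1) ≤ 1 + ε (2 cosh t - 1)`, which for
`ε = 1 / (4B) ≤ 1 / 40` is dominated by `(2/3) (1 + cosh t / √3)`; with `t ≤ sinh t` this is (ii).
For (i), `t ≤ 2 sinh (t/2)` and the half-angle formulas turn the claim into a polynomial
inequality in `a = cosh (t/2) ≥ 1`, once `1/√3` is replaced by the rational lower bound `0.577`.
-/

open Real

lemma Real.exp_mul_le_one_add_mul_exp_sub_one {ε : ℝ} (hε₀ : 0 ≤ ε) (hε₁ : ε ≤ 1) (x : ℝ) :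
    exp (ε * x) ≤ 1 + ε * (exp x - 1) := by
  have h := convexOn_exp.2 (Set.mem_univ x) (Set.mem_univ 0) hε₀ (sub_nonneg.2 hε₁) (by ring)
  simp only [smul_eq_mul, mul_zero, add_zero, exp_zero, mul_one] at h
  linarith

lemma Real.exp_mul_le_one_add_mul_two_mul_cosh_sub_one {ε : ℝ} (hε₀ : 0 ≤ ε) (hε₁ : ε ≤ 1)
    (x : ℝ) : exp (ε * x) ≤ 1 + ε * (2 * cosh x - 1) := by
  have : exp x ≤ 2 * cosh x := by rw [cosh_eq]; linarith [exp_pos (-x)]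
  calc exp (ε * x) ≤ 1 + ε * (exp x - 1) := exp_mul_le_one_add_mul_exp_sub_one hε₀ hε₁ x
    _ ≤ 1 + ε * (2 * cosh x - 1) := by gcongr

lemma mul_le_div_sqrt_three {x : ℝ} (hx : 0 ≤ x) : 577 / 1000 * x ≤ x / √3 := by
  have : (577 / 1000 : ℝ) ≤ (√3)⁻¹ := by
    rw [le_inv_comm₀ (by norm_num) (by positivity), sqrt_le_left (by norm_num)]
    norm_num
  rw [div_eq_mul_inv x, mul_comm x]
  gcongr

lemma mul_sq_sub_one_mul_le_cube (a : ℝ) (ha : 1 ≤ a) :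
    12 * a * (a ^ 2 - 1) * (1 + (4 * a ^ 2 - 3) / 40) ≤ (1 + 577 / 1000 * (2 * a ^ 2 - 1)) ^ 3 := by
  have hx : 0 ≤ a - 1 := by linarith
  nlinarith [pow_nonneg hx 2, pow_nonneg hx 3, pow_nonneg hx 4, pow_nonneg hx 5, pow_nonneg hx 6,
    mul_nonneg hx (sq_nonneg (a - 3 / 2)), mul_nonneg (pow_nonneg hx 2) (sq_nonneg (a - 3 / 2)),
    sq_nonneg (a - 3 / 2)]

section

variable {ε t : ℝ}

lemma mul_exp_mul_le_sinh_mul_one_add_cosh_div_sqrt_three (ht : 0 ≤ t) (hε₀ : 0 ≤ ε)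
    (hε : ε ≤ 1 / 40) :
    t * exp (ε * t) ≤ 2 / 3 * sinh t * (1 + cosh t / √3) := by
  have hc : 1 ≤ cosh t := one_le_cosh t
  have hexp : exp (ε * t) ≤ 2 / 3 * (1 + cosh t / √3) := calc
    exp (ε * t) ≤ 1 + ε * (2 * cosh t - 1) :=
      exp_mul_le_one_add_mul_two_mul_cosh_sub_one hε₀ (by linarith) t
    _ ≤ 1 + 1 / 40 * (2 * cosh t - 1) := by gcongr; linarith
    _ ≤ 2 / 3 * (1 + 577 / 1000 * cosh t) := by linarith
    _ ≤ 2 / 3 * (1 + cosh t / √3) := by gcongr; exact mul_le_div_sqrt_three (by linarith)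
  calc t * exp (ε * t) ≤ sinh t * (2 / 3 * (1 + cosh t / √3)) :=
        mul_le_mul (self_le_sinh_iff.2 ht) hexp (exp_pos _).le (sinh_nonneg_iff.2 ht)
    _ = 2 / 3 * sinh t * (1 + cosh t / √3) := by ring

lemma mul_sinh_mul_exp_mul_le_one_add_cosh_div_sqrt_three_pow (ht : 0 ≤ t) (hε₀ : 0 ≤ ε)
    (hε : ε ≤ 1 / 40) :
    t * sinh t * exp (ε * t) ≤ 1 / 3 * (1 + cosh t / √3) ^ 3 := by
  set a := cosh (t / 2)
  set w := sinh (t / 2)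
  have ha : 1 ≤ a := one_le_cosh _
  have hw : 0 ≤ w := sinh_nonneg_iff.2 (by linarith)
  have hsinh : sinh t = 2 * w * a := by rw [← sinh_two_mul]; ring_nf
  have hw2 : w ^ 2 = a ^ 2 - 1 := by rw [cosh_sq]; ring
  have hcosh : cosh t = 2 * a ^ 2 - 1 := by
    rw [show t = 2 * (t / 2) by ring, cosh_two_mul]; linarith
  have hexp : exp (ε * t) ≤ 1 + (4 * a ^ 2 - 3) / 40 := calc
    exp (ε * t) ≤ 1 + ε * (2 * cosh t - 1) :=
      exp_mul_le_one_add_mul_two_mul_cosh_sub_one hε₀ (by linarith) t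
    _ ≤ 1 + 1 / 40 * (2 * cosh t - 1) := by gcongr; linarith [one_le_cosh t]
    _ = 1 + (4 * a ^ 2 - 3) / 40 := by rw [hcosh]; ring
  have hmul : t * sinh t ≤ 4 * a * (a ^ 2 - 1) := calc
    t * sinh t ≤ 2 * w * (2 * w * a) := by
      rw [hsinh]
      have : t / 2 ≤ w := self_le_sinh_iff.2 (by linarith)
      gcongr; linarith
    _ = 4 * a * (a ^ 2 - 1) := by rw [← hw2]; ring
  have hcube : 1 + 577 / 1000 * (2 * a ^ 2 - 1) ≤ 1 + cosh t / √3 := by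
    rw [hcosh]
    gcongr
    exact mul_le_div_sqrt_three (by nlinarith)
  calc t * sinh t * exp (ε * t) ≤ 4 * a * (a ^ 2 - 1) * (1 + (4 * a ^ 2 - 3) / 40) :=
        mul_le_mul hmul hexp (exp_pos _).le (by nlinarith)
    _ ≤ 1 / 3 * (1 + 577 / 1000 * (2 * a ^ 2 - 1)) ^ 3 := by
      linarith [mul_sq_sub_one_mul_le_cube a ha]
    _ ≤ 1 / 3 * (1 + cosh t / √3) ^ 3 := by gcongr; nlinarith

end

lemma Real.abs_mul_sinh_abs (y : ℝ) : |y| * sinh |y| = y * sinh y := by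
  rcases le_or_gt 0 y with hy | hy
  · rw [abs_of_nonneg hy]
  · rw [abs_of_neg hy, sinh_neg]; ring

theorem stmt_16 :
    ∃ B₀ : ℝ, 1 ≤ B₀ ∧
      ∀ B : ℝ, B₀ ≤ B → ∀ y : ℝ,
        (0 ≤ y * Real.sinh y * Real.exp (|y| / (4 * B)) ∧
          y * Real.sinh y * Real.exp (|y| / (4 * B)) ≤
            (1 / 3) * (1 + Real.cosh y / Real.sqrt 3) ^ 3) ∧
        |y| * Real.exp (|y| / (4 * B)) ≤
          (2 / 3) * |Real.sinh y| * (1 + Real.cosh y / Real.sqrt 3) := by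
  refine ⟨10, by norm_num, fun B hB y => ?_⟩
  have hε₀ : 0 ≤ (4 * B)⁻¹ := inv_nonneg.2 (by linarith)
  have hε : (4 * B)⁻¹ ≤ 1 / 40 := by
    rw [one_div]; exact inv_anti₀ (by norm_num) (by linarith)
  rw [div_eq_inv_mul |y|, ← abs_mul_sinh_abs, ← cosh_abs, abs_sinh]
  exact ⟨⟨by positivity,
    mul_sinh_mul_exp_mul_le_one_add_cosh_div_sqrt_three_pow (abs_nonneg y) hε₀ hε⟩,
    mul_exp_mul_le_sinh_mul_one_add_cosh_div_sqrt_three (abs_nonneg y) hε₀ hε⟩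
end
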